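/- Let $d = 1$ and $\alpha > 0$. Define $g_\alpha^a(x) = \int_0^\infty e^{-\alpha t} p_t(a,x)\,dt$ where $p_t$ is the one-dimensional Gaussian heat kernel. For every $\gamma \in (0,1)$ there exists a constant $C_{\alpha,\gamma} > 0$ such that for all $x, a, b \in \mathbb{R}$, $|g_\alpha^a(x) - g_\alpha^b(x)| \le C_{\alpha,\gamma} |a-b|^\gamma$. -/

import Mathlib

open MeasureTheory Real Set

/-- The one-dimensional Gaussian heat kernel. -/
noncomputable def heatKernel1 (t a x : ℝ) : ℝ :=
  (2 * π * t) ^ (-(1 : ℝ) / 2) * Real.exp (-|x - a| ^ 2 / (2 * t))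

/-- The `α`-resolvent kernel `g_α^a(x) = ∫_0^∞ e^{-αt} p_t(a,x) dt` in dimension one. -/
noncomputable def gRes1 (α a x : ℝ) : ℝ :=
  ∫ t in Ioi (0 : ℝ), Real.exp (-α * t) * heatKernel1 t a x

/-!
The Gaussian `v ↦ exp (-v ^ 2 / 2)` is bounded by `1` and `1`-Lipschitz, so writing the heat
kernel in the variable `(x - a) / √t` gives
`|p_t(a,x) - p_t(b,x)| ≤ (2πt)^{-1/2} min(1, |a - b| / √t)`, which is at most
`(2π)^{-1/2} t^{-(1+γ)/2} |a - b|^γ`. Since `(1 + γ) / 2 < 1`, the weight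
`e^{-αt} t^{-(1+γ)/2}` is integrable on `(0, ∞)`, with integral `α^{-(1-γ)/2} Γ((1-γ)/2)`, and
integrating the kernel bound against `e^{-αt}` gives the claim.
-/

lemma abs_mul_exp_neg_sq_div_two_le_one (v : ℝ) : |v| * exp (-v ^ 2 / 2) ≤ 1 := by
  have hv : |v| ≤ v ^ 2 / 2 + 1 := by nlinarith [sq_nonneg (|v| - 1), sq_abs v]
  calc |v| * exp (-v ^ 2 / 2) ≤ exp (v ^ 2 / 2) * exp (-v ^ 2 / 2) := by
        gcongr
        exact hv.trans (add_one_le_exp _)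
    _ = 1 := by rw [← exp_add, neg_div, add_neg_cancel, exp_zero]

lemma exp_neg_sq_div_two_le_one (v : ℝ) : exp (-v ^ 2 / 2) ≤ 1 :=
  exp_le_one_iff.2 (by nlinarith [sq_nonneg v])

lemma abs_exp_neg_sq_div_two_sub_le (u v : ℝ) :
    |exp (-u ^ 2 / 2) - exp (-v ^ 2 / 2)| ≤ |u - v| := by
  have hderiv (w : ℝ) :
      HasDerivAt (fun v : ℝ => exp (-v ^ 2 / 2)) (exp (-w ^ 2 / 2) * -w) w := by
    convert ((hasDerivAt_pow 2 w).fun_neg.div_const 2).exp using 1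
    ring
  have hbound (w : ℝ) : ‖exp (-w ^ 2 / 2) * -w‖ ≤ 1 := by
    rw [norm_mul, norm_neg, Real.norm_of_nonneg (exp_pos _).le, mul_comm]
    exact abs_mul_exp_neg_sq_div_two_le_one w
  simpa using Convex.norm_image_sub_le_of_norm_hasDerivWithin_le
    (fun w _ => (hderiv w).hasDerivWithinAt) (fun w _ => hbound w) convex_univ
    (mem_univ v) (mem_univ u)

lemma le_rpow_of_le_one_of_le {m A γ : ℝ} (hm0 : 0 ≤ m) (hm1 : m ≤ 1) (hmA : m ≤ A)
    (hγ0 : 0 ≤ γ) (hγ1 : γ ≤ 1) : m ≤ A ^ γ :=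
  calc m = m ^ (1 : ℝ) := (rpow_one m).symm
    _ ≤ m ^ γ := rpow_le_rpow_of_exponent_ge' hm0 hm1 hγ0 hγ1
    _ ≤ A ^ γ := rpow_le_rpow hm0 hmA hγ0

lemma heatKernel1_eq {t : ℝ} (ht : 0 < t) (a x : ℝ) :
    heatKernel1 t a x = (2 * π) ^ (-(1 : ℝ) / 2) * t ^ (-(1 : ℝ) / 2) *
      exp (-((x - a) / t ^ (1 / 2 : ℝ)) ^ 2 / 2) := by
  have hsq : (t ^ (1 / 2 : ℝ)) ^ 2 = t := by
    rw [← rpow_natCast, ← rpow_mul ht.le]; norm_num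
  rw [heatKernel1, mul_rpow (by positivity) ht.le, div_pow, hsq, sq_abs]
  congr 2
  field_simp

lemma heatKernel1_nonneg {t : ℝ} (ht : 0 < t) (a x : ℝ) : 0 ≤ heatKernel1 t a x := by
  rw [heatKernel1]; positivity

lemma heatKernel1_le {t : ℝ} (ht : 0 < t) (a x : ℝ) :
    heatKernel1 t a x ≤ (2 * π) ^ (-(1 : ℝ) / 2) * t ^ (-(1 : ℝ) / 2) := by
  rw [heatKernel1_eq ht]
  exact mul_le_of_le_one_right (by positivity) (exp_neg_sq_div_two_le_one _)

lemma abs_heatKernel1_sub_le {γ : ℝ} (hγ0 : 0 ≤ γ) (hγ1 : γ ≤ 1) {t : ℝ} (ht : 0 < t)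
    (x a b : ℝ) :
    |heatKernel1 t a x - heatKernel1 t b x| ≤
      (2 * π) ^ (-(1 : ℝ) / 2) * t ^ (-(1 + γ) / 2) * |a - b| ^ γ := by
  have hs : 0 < t ^ (1 / 2 : ℝ) := rpow_pos_of_pos ht _
  set E : ℝ → ℝ := fun c => exp (-((x - c) / t ^ (1 / 2 : ℝ)) ^ 2 / 2)
  have hlip : |E a - E b| ≤ |a - b| / t ^ (1 / 2 : ℝ) := by
    refine (abs_exp_neg_sq_div_two_sub_le _ _).trans_eq ?_
    rw [← sub_div, abs_div, abs_of_pos hs, sub_sub_sub_cancel_left, abs_sub_comm]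
  have hholder : |E a - E b| ≤ (|a - b| / t ^ (1 / 2 : ℝ)) ^ γ :=
    le_rpow_of_le_one_of_le (abs_nonneg _)
      (abs_sub_le_of_nonneg_of_le (exp_pos _).le (exp_neg_sq_div_two_le_one _) (exp_pos _).le
        (exp_neg_sq_div_two_le_one _)) hlip hγ0 hγ1
  have hpow : t ^ (-(1 : ℝ) / 2) * (|a - b| / t ^ (1 / 2 : ℝ)) ^ γ
      = t ^ (-(1 + γ) / 2) * |a - b| ^ γ := by
    rw [div_rpow (abs_nonneg _) hs.le, ← rpow_mul ht.le, mul_div_assoc', mul_div_right_comm,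
      ← rpow_sub ht]
    ring_nf
  rw [heatKernel1_eq ht, heatKernel1_eq ht, ← mul_sub, abs_mul, abs_of_pos (by positivity),
    mul_assoc, mul_assoc, ← hpow]
  gcongr

lemma integrableOn_exp_neg_mul_mul_rpow {α s : ℝ} (hα : 0 < α) (hs : -1 < s) :
    IntegrableOn (fun t : ℝ => exp (-α * t) * t ^ s) (Ioi 0) :=
  (integrableOn_rpow_mul_exp_neg_mul_rpow hs one_pos hα).congr_fun
    (fun t _ => by beta_reduce; rw [rpow_one, mul_comm]) measurableSet_Ioi

lemma integral_exp_neg_mul_mul_rpow {α s : ℝ} (hα : 0 < α) (hs : -1 < s) :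
    ∫ t in Ioi (0 : ℝ), exp (-α * t) * t ^ s = (1 / α) ^ (s + 1) * Gamma (s + 1) := by
  rw [← integral_rpow_mul_exp_neg_mul_Ioi (by linarith) hα]
  refine setIntegral_congr_fun measurableSet_Ioi (fun t _ => ?_)
  rw [add_sub_cancel_right, mul_comm, neg_mul]

lemma integrableOn_exp_neg_mul_mul_heatKernel1 {α : ℝ} (hα : 0 < α) (a x : ℝ) :
    IntegrableOn (fun t : ℝ => exp (-α * t) * heatKernel1 t a x) (Ioi 0) := by
  have hmeas : Measurable fun t => exp (-α * t) * heatKernel1 t a x := by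
    unfold heatKernel1; fun_prop
  refine ((integrableOn_exp_neg_mul_mul_rpow hα (s := -(1 : ℝ) / 2) (by norm_num)).const_mul
    ((2 * π) ^ (-(1 : ℝ) / 2))).mono' hmeas.aestronglyMeasurable ?_
  filter_upwards [ae_restrict_mem measurableSet_Ioi] with t ht
  rw [norm_mul, Real.norm_of_nonneg (exp_pos _).le,
    Real.norm_of_nonneg (heatKernel1_nonneg ht a x), mul_left_comm]
  gcongr
  exact heatKernel1_le ht a x

theorem stmt4 (α : ℝ) (hα : 0 < α) (γ : ℝ) (hγ0 : 0 < γ) (hγ1 : γ < 1) :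
    ∃ C > 0, ∀ x a b : ℝ, |gRes1 α a x - gRes1 α b x| ≤ C * |a - b| ^ γ := by
  have hs : -1 < -(1 + γ) / 2 := by linarith
  have hΓ : 0 < Gamma ((1 - γ) / 2) := Gamma_pos_of_pos (by linarith)
  refine ⟨(2 * π) ^ (-(1 : ℝ) / 2) * ((1 / α) ^ ((1 - γ) / 2) * Gamma ((1 - γ) / 2)),
    by positivity, fun x a b => ?_⟩
  have hfa := integrableOn_exp_neg_mul_mul_heatKernel1 hα a x
  have hfb := integrableOn_exp_neg_mul_mul_heatKernel1 hα b x
  rw [gRes1, gRes1, ← integral_sub hfa hfb]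
  calc |∫ t in Ioi 0, (exp (-α * t) * heatKernel1 t a x - exp (-α * t) * heatKernel1 t b x)|
      ≤ ∫ t in Ioi 0, |exp (-α * t) * heatKernel1 t a x - exp (-α * t) * heatKernel1 t b x| :=
        abs_integral_le_integral_abs
    _ ≤ ∫ t in Ioi 0,
          (2 * π) ^ (-(1 : ℝ) / 2) * |a - b| ^ γ * (exp (-α * t) * t ^ (-(1 + γ) / 2)) := by
        refine setIntegral_mono_on (hfa.sub hfb).abs
          ((integrableOn_exp_neg_mul_mul_rpow hα hs).const_mul _) measurableSet_Ioi
          (fun t ht => ?_)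
        have hkernel := abs_heatKernel1_sub_le hγ0.le hγ1.le ht x a b
        rw [← mul_sub, abs_mul, abs_of_pos (exp_pos _)]
        exact (mul_le_mul_of_nonneg_left hkernel (exp_pos _).le).trans_eq (by ring)
    _ = _ := by
        rw [integral_const_mul, integral_exp_neg_mul_mul_rpow hα hs,
          show -(1 + γ) / 2 + 1 = (1 - γ) / 2 by ring]
        ring
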